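/- arXiv:0905.2997 — 2 statements merged into one kernel-verified Lean document; each statement's English description precedes it below -/
import Mathlib

section
/- Suppose n = |H| ≥ 3. For any irreducible query tree T whose leaves are H, the rounded distribution π' satisfies (1/2) · C(T, π) ≤ C(T, π') ≤ (3/2) · C(T, π). -/
open Finset

namespace ActiveLearning

variable {H A : Type*} {m : ℕ}

/-- The total mass of a weight function `v` on a finite set `S`. -/
def mass (v : H → ℝ) (S : Finset H) : ℝ := ∑ s ∈ S, v s

/-- `v` restricted to `S` and normalized. -/
noncomputable def restrict [DecidableEq H] (v : H → ℝ) (S : Finset H) : H → ℝ :=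
  fun h => if h ∈ S then v h / mass v S else 0

/-- The shrinkage `Δ` of a question `qi` on `(S, v)`. -/
noncomputable def shrink [Fintype A] [DecidableEq A] (qi : H → A)
    (S : Finset H) (v : H → ℝ) : ℝ :=
  mass v S - ∑ j : A, (mass v (S.filter fun s => qi s = j)) ^ 2 / mass v S

/-- The collision probability of a distribution `v`. -/
def CP [Fintype H] (v : H → ℝ) : ℝ := ∑ z : H, (v z) ^ 2

/-- Query trees: internal nodes are questions (indexed by `Fin m`), branches are answers,
leaves are hypotheses. -/
inductive QTree (m : ℕ) (H A : Type*) : Type _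
  | leaf : H → QTree m H A
  | node : Fin m → (A → QTree m H A) → QTree m H A

/-- Follow the answers of hypothesis `h` down the tree, returning the leaf reached. -/
def follow (q : Fin m → H → A) : QTree m H A → H → H
  | .leaf h', _ => h'
  | .node i ch, h => follow q (ch (q i h)) h

/-- The cost `c_T(h)`: sum of costs of the questions on the root-to-`h` path. -/
def pathCost (q : Fin m → H → A) (c : Fin m → ℝ) : QTree m H A → H → ℝ
  | .leaf _, _ => 0
  | .node i ch, h => c i + pathCost q c (ch (q i h)) h

/-- The leaves of `T` include `S`: every `h ∈ S` is identified by `T`. -/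
def ValidOn (q : Fin m → H → A) (T : QTree m H A) (S : Finset H) : Prop :=
  ∀ h ∈ S, follow q T h = h

/-- The expected cost `C(T, v)` of a query tree `T` under weights `v`. -/
noncomputable def treeCost [Fintype H] (q : Fin m → H → A) (c : Fin m → ℝ)
    (T : QTree m H A) (v : H → ℝ) : ℝ :=
  ∑ h : H, v h * pathCost q c T h

/-- The questions asked along the root-to-`h` path. -/
def pathQs (q : Fin m → H → A) : QTree m H A → H → List (Fin m)
  | .leaf _, _ => []
  | .node i ch, h => i :: pathQs q (ch (q i h)) h

/-- `T` is a greedy query tree for `π` on version space `S`: at every node it asks a question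
maximizing the shrinkage-cost ratio and recurses on each nonempty answer class. -/
inductive IsGreedy [Fintype A] [DecidableEq A] [DecidableEq H]
    (q : Fin m → H → A) (c : Fin m → ℝ) (π : H → ℝ) :
    QTree m H A → Finset H → Prop
  | leaf (h : H) : IsGreedy q c π (.leaf h) {h}
  | node (S : Finset H) (i : Fin m) (ch : A → QTree m H A)
      (hcard : 1 < S.card)
      (hmax : ∀ j : Fin m,
        shrink (q j) S (restrict π S) / c j ≤ shrink (q i) S (restrict π S) / c i)
      (hch : ∀ a : A, (S.filter fun s => q i s = a).Nonempty →
        IsGreedy q c π (ch a) (S.filter fun s => q i s = a)) :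
      IsGreedy q c π (.node i ch) S

/-- `T` is an `ε`-approximate greedy query tree for `π` on version space `S`. -/
inductive IsApproxGreedy [Fintype A] [DecidableEq A] [DecidableEq H]
    (ε : ℝ) (q : Fin m → H → A) (c : Fin m → ℝ) (π : H → ℝ) :
    QTree m H A → Finset H → Prop
  | leaf (h : H) : IsApproxGreedy ε q c π (.leaf h) {h}
  | node (S : Finset H) (i : Fin m) (ch : A → QTree m H A)
      (hcard : 1 < S.card)
      (happrox : ∀ j : Fin m,
        (1 - ε) * (shrink (q j) S (restrict π S) / c j) ≤
          shrink (q i) S (restrict π S) / c i)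
      (hch : ∀ a : A, (S.filter fun s => q i s = a).Nonempty →
        IsApproxGreedy ε q c π (ch a) (S.filter fun s => q i s = a)) :
      IsApproxGreedy ε q c π (.node i ch) S

/-- `T` is irreducible on version space `S`: every asked question strictly splits the
surviving set. -/
inductive Irreducible [DecidableEq A] (q : Fin m → H → A) :
    QTree m H A → Finset H → Prop
  | leaf (h : H) (S : Finset H) : Irreducible q (.leaf h) S
  | node (S : Finset H) (i : Fin m) (ch : A → QTree m H A)
      (hsplit : ∃ s ∈ S, ∃ t ∈ S, q i s ≠ q i t)
      (hch : ∀ a : A, (S.filter fun s => q i s = a).Nonempty →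
        Irreducible q (ch a) (S.filter fun s => q i s = a)) :
      Irreducible q (.node i ch) S

/-! Rounding moves a total mass `Δ ≤ n·ε` from `h_j` onto the light hypotheses, so it changes
`C(T, ·)` by at most `Δ · max_h c_T(h)`. In an irreducible tree every path has fewer than `n`
questions, so `max_h c_T(h) ≤ (n - 1)·c_max`, while `C(T, π) ≥ c_min` because the root question
is paid by everyone (if `T` is a single leaf, all costs vanish). With `ε = c_min/(c_max·n³)` the change is at most
`(n - 1)/n² · C(T, π) ≤ C(T, π)/2`. -/

section PathCost

variable (q : Fin m → H → A) {c : Fin m → ℝ}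

theorem pathCost_nonneg (hc : ∀ i, 0 ≤ c i) (T : QTree m H A) (h : H) :
    0 ≤ pathCost q c T h := by
  induction T with
  | leaf => exact le_rfl
  | node i ch ih => exact add_nonneg (hc i) (ih _)

theorem le_pathCost_node (hc : ∀ i, 0 ≤ c i) (i : Fin m) (ch : A → QTree m H A) (h : H) :
    c i ≤ pathCost q c (.node i ch) h :=
  le_add_of_nonneg_right (pathCost_nonneg q hc _ h)

theorem pathCost_le_length_mul {b : ℝ} (hc : ∀ i, c i ≤ b) (T : QTree m H A) (h : H) :
    pathCost q c T h ≤ (pathQs q T h).length * b := by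
  induction T with
  | leaf => simp [pathCost, pathQs]
  | node i ch ih =>
    simp only [pathCost, pathQs, List.length_cons, Nat.cast_succ]
    linarith [ih (q i h), hc i]

end PathCost

theorem card_filter_eq_lt_of_ne [DecidableEq A] {f : H → A} {S : Finset H} {s t : H}
    (hs : s ∈ S) (ht : t ∈ S) (hst : f s ≠ f t) (a : A) :
    (S.filter fun x => f x = a).card < S.card := by
  refine card_lt_card (filter_ssubset.mpr ?_)
  by_cases hsa : f s = a
  · exact ⟨t, ht, fun hta => hst (hsa.trans hta.symm)⟩
  · exact ⟨s, hs, hsa⟩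

theorem Irreducible.length_pathQs_lt [DecidableEq A] {q : Fin m → H → A} {T : QTree m H A}
    {S : Finset H} (hT : Irreducible q T S) {h : H} (hh : h ∈ S) :
    (pathQs q T h).length < S.card := by
  induction hT generalizing h with
  | leaf => exact card_pos.mpr ⟨h, hh⟩
  | node S i ch hsplit _ ih =>
    obtain ⟨s, hs, t, ht, hst⟩ := hsplit
    have hh' : h ∈ S.filter fun x => q i x = q i h := mem_filter.mpr ⟨hh, rfl⟩
    have := ih (q i h) ⟨h, hh'⟩ hh'
    have := card_filter_eq_lt_of_ne hs ht hst (q i h)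
    simp only [pathQs, List.length_cons]
    omega

theorem le_treeCost [Fintype H] {q : Fin m → H → A} {c : Fin m → ℝ} {T : QTree m H A}
    {v : H → ℝ} (hv : ∀ h, 0 ≤ v h) (hv1 : ∑ h, v h = 1) {a : ℝ}
    (ha : ∀ h, a ≤ pathCost q c T h) : a ≤ treeCost q c T v :=
  calc a = ∑ h, v h * a := by rw [← sum_mul, hv1, one_mul]
    _ ≤ treeCost q c T v := sum_le_sum fun h _ => mul_le_mul_of_nonneg_left (ha h) (hv h)

theorem Irreducible.pathCost_le_mul_treeCost [Fintype H] [DecidableEq A]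
    {q : Fin m → H → A} {c : Fin m → ℝ} {T : QTree m H A} (hT : Irreducible q T univ)
    {cmin cmax : ℝ} (hcmin : 0 < cmin) (hc : ∀ i, cmin ≤ c i ∧ c i ≤ cmax)
    {v : H → ℝ} (hv : ∀ h, 0 ≤ v h) (hv1 : ∑ h, v h = 1) (h : H) :
    pathCost q c T h ≤ (Fintype.card H - 1) * (cmax / cmin) * treeCost q c T v := by
  cases T with
  | leaf => simp [pathCost, treeCost]
  | node i ch =>
    have hc0 : ∀ i, 0 ≤ c i := fun i => hcmin.le.trans (hc i).1
    have hcmax : 0 ≤ cmax := (hc0 i).trans (hc i).2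
    have hcost : cmin ≤ treeCost q c (.node i ch) v :=
      le_treeCost hv hv1 fun h => (hc i).1.trans (le_pathCost_node q hc0 i ch h)
    have hlen : ((pathQs q (.node i ch) h).length : ℝ) ≤ Fintype.card H - 1 := by
      have := hT.length_pathQs_lt (mem_univ h)
      rw [card_univ] at this
      rw [le_sub_iff_add_le]
      exact_mod_cast this
    calc pathCost q c (.node i ch) h
        ≤ (pathQs q (.node i ch) h).length * cmax :=
          pathCost_le_length_mul q (fun j => (hc j).2) _ h
      _ ≤ (Fintype.card H - 1) * (cmax / cmin * cmin) := by
          rw [div_mul_cancel₀ _ hcmin.ne']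
          exact mul_le_mul_of_nonneg_right hlen hcmax
      _ ≤ (Fintype.card H - 1) * (cmax / cmin) * treeCost q c (.node i ch) v := by
          rw [← mul_assoc]
          refine mul_le_mul_of_nonneg_left hcost (mul_nonneg ?_ (by positivity))
          linarith [(Nat.cast_nonneg _ : (0 : ℝ) ≤ (pathQs q (.node i ch) h).length)]

theorem abs_treeCost_sub_le_of_transfer [Fintype H] [DecidableEq H] {q : Fin m → H → A}
    {c : Fin m → ℝ} {T : QTree m H A} {M : ℝ}
    (hp : ∀ h, 0 ≤ pathCost q c T h ∧ pathCost q c T h ≤ M)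
    {π π' w : H → ℝ} {B : Finset H} (hw : ∀ h ∈ B, 0 ≤ w h) (h₀ : H)
    (hπ' : ∀ h, π' h = π h + (if h ∈ B then w h else 0) - if h = h₀ then ∑ x ∈ B, w x else 0) :
    |treeCost q c T π' - treeCost q c T π| ≤ (∑ x ∈ B, w x) * M := by
  have hdiff : treeCost q c T π' - treeCost q c T π =
      ∑ h ∈ B, w h * pathCost q c T h - (∑ x ∈ B, w x) * pathCost q c T h₀ := by
    have hterm : ∀ h, π' h * pathCost q c T h = π h * pathCost q c T h
        + (if h ∈ B then w h * pathCost q c T h else 0)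
        - if h = h₀ then (∑ x ∈ B, w x) * pathCost q c T h else 0 := by
      intro h
      rw [hπ']
      split_ifs <;> ring
    simp only [treeCost, hterm, sum_sub_distrib, sum_add_distrib, sum_ite_mem, univ_inter,
      sum_ite_eq', mem_univ, if_true]
    ring
  rw [hdiff]
  apply abs_sub_le_of_nonneg_of_le
  · exact sum_nonneg fun h hh => mul_nonneg (hw h hh) (hp h).1
  · rw [sum_mul]
    exact sum_le_sum fun h hh => mul_le_mul_of_nonneg_left (hp h).2 (hw h hh)
  · exact mul_nonneg (sum_nonneg hw) (hp h₀).1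
  · exact mul_le_mul_of_nonneg_left (hp h₀).2 (sum_nonneg hw)

theorem sum_sub_le_card_mul [Fintype H] {π : H → ℝ} (hπ : ∀ h, 0 ≤ π h) {e : ℝ} (he : 0 ≤ e)
    (B : Finset H) : ∑ h ∈ B, (e - π h) ≤ Fintype.card H * e :=
  calc ∑ h ∈ B, (e - π h) ≤ ∑ _h ∈ B, e := sum_le_sum fun h _ => sub_le_self _ (hπ h)
    _ ≤ ∑ _h : H, e := sum_le_sum_of_subset_of_nonneg (subset_univ B) fun _ _ _ => he
    _ = Fintype.card H * e := by simp

theorem sub_one_div_sq_le_half (x : ℝ) : (x - 1) / x ^ 2 ≤ 1 / 2 := by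
  rcases eq_or_ne x 0 with rfl | hx
  · norm_num
  · rw [div_le_iff₀ (by positivity)]
    nlinarith [sq_nonneg (x - 1)]

theorem rounding_cost_bound_general [Fintype H] [Fintype A] [DecidableEq H] [DecidableEq A]
    (π : H → ℝ) (hπpos : ∀ h, 0 < π h) (hπsum : ∑ h : H, π h = 1)
    (q : Fin m → H → A) (c : Fin m → ℝ) (hc : ∀ i, 0 < c i)
    (cmin cmax : ℝ)
    (hcmin : IsLeast (Set.range c) cmin) (hcmax : IsGreatest (Set.range c) cmax)
    (eps : ℝ) (heps : eps = cmin / (cmax * (Fintype.card H : ℝ) ^ 3))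
    (hj : H)
    (π' : H → ℝ)
    (hπ' : ∀ h : H, π' h =
      (if π h < eps then eps else π h) -
        (if h = hj then ∑ h' ∈ Finset.univ.filter (fun h'' => π h'' < eps), (eps - π h')
          else 0))
    (T : QTree m H A)
    (hirr : Irreducible q T Finset.univ) :
    (1 / 2) * treeCost q c T π ≤ treeCost q c T π' ∧
      treeCost q c T π' ≤ (3 / 2) * treeCost q c T π := by
  set N : ℝ := (Fintype.card H : ℝ)
  set C := treeCost q c T π
  obtain ⟨i₀, hi₀⟩ := hcmin.1
  have hcmin0 : 0 < cmin := hi₀ ▸ hc i₀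
  have hcmax0 : 0 < cmax := hcmin0.trans_le (hi₀ ▸ hcmax.2 ⟨i₀, rfl⟩)
  have hN : N ≠ 0 := Nat.cast_ne_zero.mpr (Fintype.card_pos_iff.mpr ⟨hj⟩).ne'
  have hπnonneg : ∀ h, 0 ≤ π h := fun h => (hπpos h).le
  have hC : 0 ≤ C := le_treeCost hπnonneg hπsum (pathCost_nonneg q (fun i => (hc i).le) T)
  have hpath : ∀ h, 0 ≤ pathCost q c T h ∧ pathCost q c T h ≤ (N - 1) * (cmax / cmin) * C :=
    fun h => ⟨pathCost_nonneg q (fun i => (hc i).le) T h,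
      hirr.pathCost_le_mul_treeCost hcmin0 (fun i => ⟨hcmin.2 ⟨i, rfl⟩, hcmax.2 ⟨i, rfl⟩⟩)
        hπnonneg hπsum h⟩
  have hshift := abs_treeCost_sub_le_of_transfer hpath (π := π) (π' := π')
    (w := fun h => eps - π h) (B := univ.filter fun h => π h < eps)
    (fun h hh => sub_nonneg.mpr (mem_filter.mp hh).2.le) hj
    (fun h => by rw [hπ' h]; simp only [mem_filter, mem_univ, true_and]; split_ifs <;> ring)
  have hhalf : (∑ h ∈ univ.filter (fun h => π h < eps), (eps - π h)) *
      ((N - 1) * (cmax / cmin) * C) ≤ C / 2 :=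
    calc _ ≤ N * eps * ((N - 1) * (cmax / cmin) * C) :=
          mul_le_mul_of_nonneg_right (sum_sub_le_card_mul hπnonneg (heps ▸ by positivity) _)
            ((hpath hj).1.trans (hpath hj).2)
      _ = (N - 1) / N ^ 2 * C := by rw [heps]; field_simp
      _ ≤ C / 2 := by linarith [mul_le_mul_of_nonneg_right (sub_one_div_sq_le_half N) hC]
  rw [abs_sub_le_iff] at hshift
  constructor <;> linarith

/-- For `n = |H| ≥ 3` and any irreducible query tree `T` whose leaves are
`H`, the rounded distribution `π'` satisfies `(1/2)·C(T, π) ≤ C(T, π') ≤ (3/2)·C(T, π)`.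
Here `π'` raises to `ε = c_min/(c_max·n³)` the mass of every `h` with `π(h) < ε` and
subtracts the total added mass from a fixed `h_j` with `π(h_j) ≥ 1/n`. -/
theorem rounding_cost_bound [Fintype H] [Fintype A] [DecidableEq H] [DecidableEq A]
    (π : H → ℝ) (hπpos : ∀ h, 0 < π h) (hπsum : ∑ h : H, π h = 1)
    (hn : 3 ≤ Fintype.card H)
    (q : Fin m → H → A) (c : Fin m → ℝ) (hc : ∀ i, 0 < c i)
    (hdist : ∀ h h' : H, h ≠ h' → ∃ i : Fin m, q i h ≠ q i h')
    (cmin cmax : ℝ)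
    (hcmin : IsLeast (Set.range c) cmin) (hcmax : IsGreatest (Set.range c) cmax)
    (eps : ℝ) (heps : eps = cmin / (cmax * (Fintype.card H : ℝ) ^ 3))
    (hj : H) (hhj : 1 / (Fintype.card H : ℝ) ≤ π hj)
    (π' : H → ℝ)
    (hπ' : ∀ h : H, π' h =
      (if π h < eps then eps else π h) -
        (if h = hj then ∑ h' ∈ Finset.univ.filter (fun h'' => π h'' < eps), (eps - π h')
          else 0))
    (T : QTree m H A) (hT : ValidOn q T Finset.univ)
    (hirr : Irreducible q T Finset.univ) :
    (1 / 2) * treeCost q c T π ≤ treeCost q c T π' ∧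
      treeCost q c T π' ≤ (3 / 2) * treeCost q c T π :=
  rounding_cost_bound_general π hπpos hπsum q c hc cmin cmax hcmin hcmax eps heps hj π' hπ' T hirr

end ActiveLearning
end

section
/- Let ε ∈ [0,1), let S ⊆ H with |S| > 1 and h_0 ∈ S with π_S(h_0) > 1/2, let R = S \ {h_0}, and let T* be any query tree whose leaves contain S. If a question q_i satisfies Δ_i(S, π_S)/c_i ≥ (1−ε) · max_j Δ_j(S, π_S)/c_j, then δ_i / c_i ≥ (1−ε) / (2 · C*(h_0)). -/
open Finset

namespace ActiveLearning

variable {H A : Type*} {m : ℕ}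

/-! Write `σⱼ` for the `π_S`-mass of the elements of `S` that `q_j` separates from `h₀`. It
controls the shrinkage from both sides: `Δⱼ ≤ 2σⱼ` always, and `σⱼ ≤ Δⱼ` as soon as `σⱼ ≤ 1/2`,
which holds for every question because `σⱼ ≤ π_S(R) < 1/2`. Hence an `ε`-approximately greedy
question satisfies `(1 - ε) σⱼ / cⱼ ≤ 2 σᵢ / cᵢ` for every `j`. On the other hand `T*` separates
every `r ∈ R` from `h₀` by some question on the root-to-`h₀` path, so by a union bound
`π_S(R) ≤ ∑ σⱼ ≤ 2 σᵢ C*(h₀) / ((1 - ε) cᵢ)`, the sum running over that path. Since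
`δᵢ = σᵢ / π_S(R)`, this is the claim. -/

def separatedMass [DecidableEq A] (v : H → ℝ) (S : Finset H) (qi : H → A) (h0 : H) : ℝ :=
  mass v (S.filter fun s => qi s ≠ qi h0)

section Mass

variable {v : H → ℝ} {S T : Finset H}

lemma mass_mono (hv : ∀ h, 0 ≤ v h) (hTS : T ⊆ S) : mass v T ≤ mass v S :=
  Finset.sum_le_sum_of_subset_of_nonneg hTS fun s _ _ => hv s

lemma mass_filter_add_mass_filter_not (p : H → Prop) [DecidablePred p] :
    mass v (S.filter p) + mass v (S.filter fun s => ¬p s) = mass v S :=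
  Finset.sum_filter_add_sum_filter_not S p v

variable [DecidableEq H]

lemma restrict_nonneg (hv : ∀ h, 0 ≤ v h) (h : H) : 0 ≤ restrict v S h := by
  unfold restrict
  split_ifs
  exacts [div_nonneg (hv h) (Finset.sum_nonneg fun s _ => hv s), le_rfl]

lemma mass_restrict (hTS : T ⊆ S) : mass (restrict v S) T = mass v T / mass v S := by
  rw [mass, mass, Finset.sum_div]
  exact Finset.sum_congr rfl fun t ht => if_pos (hTS ht)

lemma mass_restrict_self (hS : mass v S ≠ 0) : mass (restrict v S) S = 1 := by
  rw [mass_restrict subset_rfl, div_self hS]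

end Mass

section SeparatedMass

variable [DecidableEq A] {v : H → ℝ} {S : Finset H} {qi : H → A} {h0 : H}

lemma separatedMass_nonneg (hv : ∀ h, 0 ≤ v h) : 0 ≤ separatedMass v S qi h0 :=
  Finset.sum_nonneg fun s _ => hv s

lemma mass_filter_eq_eq_sub_separatedMass (qi : H → A) (h0 : H) :
    mass v (S.filter fun s => qi s = qi h0) = mass v S - separatedMass v S qi h0 :=
  eq_sub_of_add_eq (mass_filter_add_mass_filter_not _)

variable [DecidableEq H]

lemma separatedMass_erase_self : separatedMass v (S.erase h0) qi h0 = separatedMass v S qi h0 := by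
  rw [separatedMass, separatedMass, Finset.filter_erase, Finset.erase_eq_of_notMem (by simp)]

lemma separatedMass_restrict {R : Finset H} (hRS : R ⊆ S) :
    separatedMass (restrict v S) R qi h0 = separatedMass v R qi h0 / mass v S :=
  mass_restrict ((Finset.filter_subset _ _).trans hRS)

lemma separatedMass_restrict_erase (hS : mass v S ≠ 0) :
    separatedMass (restrict v (S.erase h0)) (S.erase h0) qi h0 =
      separatedMass (restrict v S) S qi h0 / mass (restrict v S) (S.erase h0) := by
  rw [separatedMass_restrict subset_rfl, separatedMass_restrict subset_rfl,
    mass_restrict (Finset.erase_subset _ _), separatedMass_erase_self,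
    div_div_div_cancel_right₀ hS]

lemma separatedMass_le_mass_sub (hv : ∀ h, 0 ≤ v h) (h0S : h0 ∈ S) :
    separatedMass v S qi h0 ≤ mass v S - v h0 := by
  rw [mass, ← Finset.add_sum_erase S v h0S, add_sub_cancel_left]
  refine mass_mono hv fun s hs => ?_
  obtain ⟨hsS, hsne⟩ := Finset.mem_filter.mp hs
  exact Finset.mem_erase.mpr ⟨fun h => hsne (h ▸ rfl), hsS⟩

end SeparatedMass

section Shrink

variable [Fintype A] [DecidableEq A] {v : H → ℝ} {S : Finset H} {qi : H → A} {h0 : H}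

lemma shrink_le_two_mul_separatedMass (hS : 0 < mass v S) :
    shrink qi S v ≤ 2 * separatedMass v S qi h0 := by
  set M := mass v S
  set δ := separatedMass v S qi h0
  set w : A → ℝ := fun a => mass v (S.filter fun s => qi s = a)
  have hw : (M - δ) ^ 2 ≤ ∑ a, w a ^ 2 := by
    rw [← mass_filter_eq_eq_sub_separatedMass qi h0]
    exact Finset.single_le_sum (f := fun a => w a ^ 2) (fun a _ => sq_nonneg _)
      (Finset.mem_univ _)
  have hexpand : (M - δ) ^ 2 / M = M - 2 * δ + δ ^ 2 / M := by
    field_simp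
    ring
  have hdiv : (M - δ) ^ 2 / M ≤ (∑ a, w a ^ 2) / M := by gcongr
  have hδ2 : 0 ≤ δ ^ 2 / M := by positivity
  rw [shrink, ← Finset.sum_div]
  linarith

lemma separatedMass_le_shrink (hv : ∀ h, 0 ≤ v h) (hS : 0 < mass v S)
    (hδ : 2 * separatedMass v S qi h0 ≤ mass v S) :
    separatedMass v S qi h0 ≤ shrink qi S v := by
  set M := mass v S
  set δ := separatedMass v S qi h0
  set w : A → ℝ := fun a => mass v (S.filter fun s => qi s = a)
  have hδ0 : 0 ≤ δ := separatedMass_nonneg hv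
  have hwh0 : w (qi h0) = M - δ := mass_filter_eq_eq_sub_separatedMass qi h0
  -- the answer classes other than that of `h0` partition the separated set
  have hrest : ∑ a ∈ Finset.univ.erase (qi h0), w a = δ := by
    have htotal : ∑ a, w a = M := Finset.sum_fiberwise S qi v
    linarith [Finset.add_sum_erase Finset.univ w (Finset.mem_univ (qi h0))]
  have hsq : ∑ a, w a ^ 2 ≤ (M - δ) ^ 2 + δ ^ 2 := by
    have hrest_sq : ∑ a ∈ Finset.univ.erase (qi h0), w a ^ 2 ≤ δ ^ 2 := by
      rw [← hrest]
      exact Finset.sum_sq_le_sq_sum_of_nonneg fun a _ => Finset.sum_nonneg fun s _ => hv s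
    rw [← Finset.add_sum_erase _ _ (Finset.mem_univ (qi h0)), hwh0]
    linarith
  have hbound : ∑ a, w a ^ 2 ≤ (M - δ) * M := by
    nlinarith [mul_nonneg hδ0 (sub_nonneg.mpr hδ)]
  have hdiv : (∑ a, w a ^ 2) / M ≤ M - δ := (div_le_iff₀ hS).mpr hbound
  rw [shrink, ← Finset.sum_div]
  linarith

lemma separatedMass_div_le_of_approx_greedy [DecidableEq H] {q : Fin m → H → A}
    {c : Fin m → ℝ} {ε : ℝ} {i : Fin m} (hv : ∀ h, 0 ≤ v h) (h0S : h0 ∈ S)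
    (hh0 : mass v S < 2 * v h0) (hc : ∀ j, 0 < c j) (hε : ε ≤ 1)
    (hi : ∀ j, (1 - ε) * (shrink (q j) S v / c j) ≤ shrink (q i) S v / c i) (j : Fin m) :
    (1 - ε) * separatedMass v S (q j) h0 / c j ≤ 2 * separatedMass v S (q i) h0 / c i := by
  have hS : 0 < mass v S := by
    have : v h0 ≤ mass v S := Finset.single_le_sum (fun s _ => hv s) h0S
    linarith [hv h0]
  have hδ : 2 * separatedMass v S (q j) h0 ≤ mass v S := by
    linarith [separatedMass_le_mass_sub (qi := q j) hv h0S]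
  calc (1 - ε) * separatedMass v S (q j) h0 / c j
      ≤ (1 - ε) * shrink (q j) S v / c j := by
        gcongr
        · exact (hc j).le
        · exact separatedMass_le_shrink hv hS hδ
    _ = (1 - ε) * (shrink (q j) S v / c j) := mul_div_assoc _ _ _
    _ ≤ shrink (q i) S v / c i := hi j
    _ ≤ 2 * separatedMass v S (q i) h0 / c i := by
        gcongr
        · exact (hc i).le
        · exact shrink_le_two_mul_separatedMass hS

end Shrink

/-- The union bound along the root-to-`h0` path of `T`, which separates every `r ∈ R` from `h0`. -/
lemma mass_le_mul_pathCost [DecidableEq A] {v : H → ℝ} (hv : ∀ h, 0 ≤ v h)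
    {q : Fin m → H → A} {c : Fin m → ℝ} {K : ℝ} {h0 : H} {T : QTree m H A}
    (hT0 : follow q T h0 = h0) {R : Finset H} (h0R : h0 ∉ R)
    (hTR : ∀ r ∈ R, follow q T r = r) (hsep : ∀ j, separatedMass v R (q j) h0 ≤ K * c j) :
    mass v R ≤ K * pathCost q c T h0 := by
  induction T generalizing R with
  | leaf h' =>
    have hR : R = ∅ := Finset.eq_empty_of_forall_notMem fun r hr =>
      h0R (((hTR r hr).symm.trans hT0) ▸ hr)
    simp [hR, mass, pathCost]
  | node i ch ih =>
    set R' := R.filter fun r => q i r = q i h0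
    have hsplit : mass v R = mass v R' + separatedMass v R (q i) h0 :=
      (mass_filter_add_mass_filter_not _).symm
    have hR' : mass v R' ≤ K * pathCost q c (ch (q i h0)) h0 := by
      refine ih (q i h0) hT0 (fun h => h0R (Finset.mem_of_mem_filter _ h)) (fun r hr => ?_)
        fun j => ?_
      · obtain ⟨hrR, hr0⟩ := Finset.mem_filter.mp hr
        simpa [follow, hr0] using hTR r hrR
      · exact (mass_mono hv (Finset.filter_subset_filter _ (Finset.filter_subset _ _))).trans
          (hsep j)
    rw [pathCost]
    linarith [hsep i]

lemma one_sub_div_two_mul_pathCost_le [Fintype A] [DecidableEq H] [DecidableEq A]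
    {v : H → ℝ} {q : Fin m → H → A} {c : Fin m → ℝ} {ε : ℝ} {S : Finset H} {h0 : H}
    {T : QTree m H A} {i : Fin m} (hv : ∀ h, 0 ≤ v h) (hc : ∀ j, 0 < c j) (hε : ε < 1)
    (h0S : h0 ∈ S) (hh0 : mass v S < 2 * v h0) (hR : 0 < mass v (S.erase h0))
    (hT : ValidOn q T S)
    (hi : ∀ j, (1 - ε) * (shrink (q j) S v / c j) ≤ shrink (q i) S v / c i) :
    (1 - ε) / (2 * pathCost q c T h0) ≤
      separatedMass v S (q i) h0 / mass v (S.erase h0) / c i := by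
  set δ := separatedMass v S (q i) h0
  have hε0 : 0 < 1 - ε := sub_pos.mpr hε
  have hK : 0 ≤ 2 * δ / c i / (1 - ε) := by
    have := separatedMass_nonneg (S := S) (qi := q i) (h0 := h0) hv
    have := hc i
    positivity
  have hcover : mass v (S.erase h0) ≤ 2 * δ / c i / (1 - ε) * pathCost q c T h0 := by
    refine mass_le_mul_pathCost hv (hT h0 h0S) (Finset.notMem_erase _ _)
      (fun r hr => hT r (Finset.mem_of_mem_erase hr)) fun j => ?_
    have := separatedMass_div_le_of_approx_greedy hv h0S hh0 hc hε.le hi j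
    rw [div_le_iff₀ (hc j)] at this
    rw [separatedMass_erase_self, div_mul_eq_mul_div, le_div_iff₀ hε0]
    linarith
  have hC : 0 < pathCost q c T h0 := pos_of_mul_pos_right (hR.trans_le hcover) hK
  rw [div_right_comm, div_le_div_iff₀ (by positivity) hR]
  rw [div_mul_eq_mul_div, le_div_iff₀ hε0] at hcover
  linarith [show 2 * δ / c i * pathCost q c T h0 = δ / c i * (2 * pathCost q c T h0) by ring]

theorem approx_greedy_separates_general [Fintype H] [Fintype A] [DecidableEq H] [DecidableEq A]
    (π : H → ℝ) (hπpos : ∀ h, 0 < π h)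
    (q : Fin m → H → A) (c : Fin m → ℝ) (hc : ∀ i, 0 < c i)
    (ε : ℝ) (hε1 : ε < 1)
    (S : Finset H) (hS : 1 < S.card)
    (h0 : H) (h0S : h0 ∈ S) (hh0 : 1 / 2 < restrict π S h0)
    (Tstar : QTree m H A) (hTstar : ValidOn q Tstar S)
    (i : Fin m)
    (hi : ∀ j : Fin m,
      (1 - ε) * (shrink (q j) S (restrict π S) / c j) ≤
        shrink (q i) S (restrict π S) / c i) :
    (1 - ε) / (2 * pathCost q c Tstar h0) ≤
      mass (restrict π (S.erase h0))
        ((S.erase h0).filter fun r => q i r ≠ q i h0) / c i := by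
  have hπS : 0 < mass π S := Finset.sum_pos (fun s _ => hπpos s) ⟨h0, h0S⟩
  have hR : 0 < mass (restrict π S) (S.erase h0) := by
    rw [mass_restrict (Finset.erase_subset _ _)]
    exact div_pos (Finset.sum_pos (fun s _ => hπpos s)
      (Finset.one_lt_card_iff_nontrivial.mp hS).erase_nonempty) hπS
  have hh0' : mass (restrict π S) S < 2 * restrict π S h0 := by
    rw [mass_restrict_self hπS.ne']
    linarith
  change _ ≤ separatedMass (restrict π (S.erase h0)) (S.erase h0) (q i) h0 / c i
  rw [separatedMass_restrict_erase hπS.ne']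
  exact one_sub_div_two_mul_pathCost_le (restrict_nonneg fun h => (hπpos h).le) hc hε1 h0S
    hh0' hR hTstar hi

/-- If `ε ∈ [0,1)`, `h_0 ∈ S` has `π_S(h_0) > 1/2`, `R = S \ {h_0}`, `T*`
is any query tree whose leaves contain `S`, and `q_i` is an `ε`-approximately greedy
choice on `S`, then `δ_i / c_i ≥ (1−ε) / (2 · C*(h_0))`. -/
theorem approx_greedy_separates [Fintype H] [Fintype A] [DecidableEq H] [DecidableEq A]
    (π : H → ℝ) (hπpos : ∀ h, 0 < π h) (hπsum : ∑ h : H, π h = 1)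
    (hH : 1 < Fintype.card H)
    (q : Fin m → H → A) (c : Fin m → ℝ) (hc : ∀ i, 0 < c i)
    (ε : ℝ) (hε0 : 0 ≤ ε) (hε1 : ε < 1)
    (S : Finset H) (hS : 1 < S.card)
    (h0 : H) (h0S : h0 ∈ S) (hh0 : 1 / 2 < restrict π S h0)
    (Tstar : QTree m H A) (hTstar : ValidOn q Tstar S)
    (i : Fin m)
    (hi : ∀ j : Fin m,
      (1 - ε) * (shrink (q j) S (restrict π S) / c j) ≤
        shrink (q i) S (restrict π S) / c i) :
    (1 - ε) / (2 * pathCost q c Tstar h0) ≤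
      mass (restrict π (S.erase h0))
        ((S.erase h0).filter fun r => q i r ≠ q i h0) / c i :=
  approx_greedy_separates_general π hπpos q c hc ε hε1 S hS h0 h0S hh0 Tstar hTstar i hi

end ActiveLearning
end
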